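/- If no quasi-symmetric 2-(57,12,11) design with block intersection numbers 0 and 3 exists, then no quasi-3 design with parameters 2-(267,57,12) and triple intersection numbers 0 and 3 exists. -/

import Mathlib

/-!
In a 2-design with as many blocks as points every point lies on `k` blocks, and counting
points and pairs of points of a block `B` shows that the sizes of `B ∩ B'` over the other
blocks `B'` have mean `λ` and mean square `λ²`, so every such intersection has exactly `λ`
points. Cutting the other blocks down to `B` then gives the derived 2-`(k, λ, λ - 1)` design,
whose block intersections are the triple intersections `B ∩ B' ∩ B''` of the original one.
-/

/-- A `t`-`(v,k,lam)` design: `X` is the point set with `v` points, blocks are indexed by the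
finite index set `b`, each block `blk i` is a `k`-subset of `X`, and every `t`-subset of `X`
is contained in exactly `lam` blocks. -/
def IsDesign {α ι : Type*} [DecidableEq α] (X : Finset α) (b : Finset ι)
    (blk : ι → Finset α) (v k t lam : ℕ) : Prop :=
  X.card = v ∧ (∀ i ∈ b, blk i ⊆ X ∧ (blk i).card = k) ∧
    ∀ T ⊆ X, T.card = t → (b.filter fun i => T ⊆ blk i).card = lam

open Finset

theorem Finset.sum_card_inter_eq_sum_card_filter_mem {α ι : Type*} [DecidableEq α]
    (S : Finset α) (b : Finset ι) (blk : ι → Finset α) :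
    ∑ j ∈ b, (S ∩ blk j).card = ∑ p ∈ S, (b.filter (p ∈ blk ·)).card := by
  simp only [card_filter, ← filter_mem_eq_inter]
  exact sum_comm

theorem Finset.eq_of_sum_eq_of_sum_sq_eq {ι : Type*} {s : Finset ι} {x : ι → ℕ} {c : ℕ}
    (h₁ : ∑ j ∈ s, x j = s.card * c) (h₂ : ∑ j ∈ s, x j ^ 2 = s.card * c ^ 2)
    {j : ι} (hj : j ∈ s) : x j = c := by
  have e₁ : ∑ j ∈ s, (x j : ℤ) = s.card * c := by exact_mod_cast h₁
  have e₂ : ∑ j ∈ s, (x j : ℤ) ^ 2 = s.card * c ^ 2 := by exact_mod_cast h₂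
  have hzero : ∑ j ∈ s, ((x j : ℤ) - c) ^ 2 = 0 := by
    simp only [sub_sq, sum_add_distrib, sum_sub_distrib, ← sum_mul, ← mul_sum, sum_const,
      nsmul_eq_mul, e₁, e₂]
    ring
  have := (sum_eq_zero_iff_of_nonneg fun j _ => sq_nonneg _).mp hzero j hj
  exact_mod_cast sub_eq_zero.mp (pow_eq_zero_iff two_ne_zero |>.mp this)

theorem Finset.card_univ_filter_mem {α β : Type*} [Fintype β] [DecidableEq α] (f : β ↪ α)
    {s : Finset α} (hs : s ⊆ univ.map f) : (univ.filter (f · ∈ s)).card = s.card := by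
  rw [← card_map f]
  congr 1
  ext a
  simp only [mem_map, mem_filter, mem_univ, true_and]
  refine ⟨fun ⟨x, hx, hxa⟩ => hxa ▸ hx, fun ha => ?_⟩
  obtain ⟨x, -, rfl⟩ := mem_map.mp (hs ha)
  exact ⟨x, ha, rfl⟩

namespace IsDesign

variable {α ι : Type*} [DecidableEq α] {X : Finset α} {b : Finset ι} {blk : ι → Finset α}
  {v k t lam : ℕ}

theorem card_filter_mem_mem (hD : IsDesign X b blk v k 2 lam) {p q : α} (hp : p ∈ X)
    (hq : q ∈ X) (hpq : p ≠ q) : (b.filter fun j => p ∈ blk j ∧ q ∈ blk j).card = lam := by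
  have h := hD.2.2 {p, q} (by simp [insert_subset_iff, hp, hq]) (card_pair hpq)
  simpa only [insert_subset_iff, singleton_subset_iff] using h

theorem card_filter_mem_mul (hD : IsDesign X b blk v k 2 lam) {p : α} (hp : p ∈ X) :
    (b.filter (p ∈ blk ·)).card * (k - 1) = lam * (v - 1) := by
  have hflags := sum_card_inter_eq_sum_card_filter_mem (X.erase p) (b.filter (p ∈ blk ·)) blk
  have hleft : ∀ j ∈ b.filter (p ∈ blk ·), (X.erase p ∩ blk j).card = k - 1 := by
    intro j hj
    obtain ⟨hjb, hpj⟩ := mem_filter.mp hj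
    rw [erase_inter, inter_eq_right.mpr (hD.2.1 j hjb).1, card_erase_of_mem hpj,
      (hD.2.1 j hjb).2]
  have hright : ∀ q ∈ X.erase p, ((b.filter (p ∈ blk ·)).filter (q ∈ blk ·)).card = lam := by
    intro q hq
    rw [filter_filter]
    exact hD.card_filter_mem_mem hp (mem_of_mem_erase hq) (ne_of_mem_erase hq).symm
  rw [sum_congr rfl hleft, sum_congr rfl hright, sum_const, sum_const, card_erase_of_mem hp,
    hD.1, smul_eq_mul, smul_eq_mul] at hflags
  rw [hflags, mul_comm]

theorem card_filter_mem_eq_of_card_eq (hD : IsDesign X b blk v k 2 lam) (hb : b.card = v)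
    (hk : 2 ≤ k) {p : α} (hp : p ∈ X) : (b.filter (p ∈ blk ·)).card = k := by
  have hconst : ∀ q ∈ X, (b.filter (q ∈ blk ·)).card = (b.filter (p ∈ blk ·)).card :=
    fun q hq => Nat.eq_of_mul_eq_mul_right (by omega)
      ((hD.card_filter_mem_mul hq).trans (hD.card_filter_mem_mul hp).symm)
  have hflags := sum_card_inter_eq_sum_card_filter_mem X b blk
  rw [sum_congr rfl fun j hj => by rw [inter_eq_right.mpr (hD.2.1 j hj).1, (hD.2.1 j hj).2],
    sum_congr rfl hconst, sum_const, sum_const, hb, hD.1, smul_eq_mul, smul_eq_mul] at hflags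
  have hv : 0 < v := hD.1 ▸ card_pos.mpr ⟨p, hp⟩
  exact (Nat.eq_of_mul_eq_mul_left hv hflags).symm

theorem sum_card_inter_sq (hD : IsDesign X b blk v k 2 lam) {B : Finset α} (hB : B ⊆ X)
    {r : ℕ} (hr : ∀ p ∈ B, (b.filter (p ∈ blk ·)).card = r) :
    ∑ j ∈ b, (B ∩ blk j).card ^ 2 = B.card * (r + (B.card - 1) * lam) := by
  have hsq : ∀ j ∈ b, (B ∩ blk j).card ^ 2 = (B ×ˢ B ∩ blk j ×ˢ blk j).card := fun j _ => by
    rw [product_inter_product, card_product, sq]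
  have hpairs : ∀ p ∈ B,
      ∑ q ∈ B, (b.filter fun j => (p, q) ∈ blk j ×ˢ blk j).card = r + (B.card - 1) * lam := by
    intro p hp
    have hoff : ∀ q ∈ B.erase p, (b.filter fun j => (p, q) ∈ blk j ×ˢ blk j).card = lam :=
      fun q hq => by
        simpa only [mem_product] using
          hD.card_filter_mem_mem (hB hp) (hB (mem_of_mem_erase hq)) (ne_of_mem_erase hq).symm
    rw [← add_sum_erase B _ hp, sum_congr rfl hoff, sum_const, card_erase_of_mem hp,
      smul_eq_mul, ← hr p hp]
    simp only [mem_product, and_self]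
  rw [sum_congr rfl hsq, sum_card_inter_eq_sum_card_filter_mem, sum_product,
    sum_congr rfl hpairs, sum_const, smul_eq_mul]

theorem card_inter_eq_of_card_eq (hD : IsDesign X b blk v k 2 lam) (hb : b.card = v)
    (hk : 2 ≤ k) {i j : ι} (hi : i ∈ b) (hj : j ∈ b) (hij : i ≠ j) :
    (blk i ∩ blk j).card = lam := by
  classical
  obtain ⟨hBX, hBk⟩ := hD.2.1 i hi
  have hr : ∀ p ∈ blk i, (b.filter (p ∈ blk ·)).card = k :=
    fun p hp => hD.card_filter_mem_eq_of_card_eq hb hk (hBX hp)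
  have hkv : k * (k - 1) = lam * (v - 1) := by
    obtain ⟨p, hp⟩ : (blk i).Nonempty := card_pos.mp (by omega)
    rw [← hD.card_filter_mem_mul (hBX hp), hr p hp]
  have hsum := sum_card_inter_eq_sum_card_filter_mem (blk i) b blk
  rw [sum_congr rfl hr, sum_const, smul_eq_mul, hBk, ← add_sum_erase b _ hi, inter_self,
    hBk] at hsum
  have hsq := hD.sum_card_inter_sq hBX hr
  rw [hBk, ← add_sum_erase b _ hi, inter_self, hBk] at hsq
  have hcard : (b.erase i).card = v - 1 := by rw [card_erase_of_mem hi, hb]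
  obtain ⟨m, rfl⟩ : ∃ m, k = m + 1 := ⟨k - 1, by omega⟩
  rw [Nat.add_sub_cancel] at hkv hsq
  refine eq_of_sum_eq_of_sum_sq_eq (x := fun j => (blk i ∩ blk j).card) ?_ ?_
    (mem_erase.mpr ⟨hij.symm, hj⟩)
  · rw [hcard]
    linarith
  · rw [hcard]
    nlinarith

theorem derived [DecidableEq ι] (hD : IsDesign X b blk v k t lam) {i : ι} (hi : i ∈ b) {μ : ℕ}
    (hμ : ∀ j ∈ b, j ≠ i → (blk i ∩ blk j).card = μ) :
    IsDesign (blk i) (b.erase i) (fun j => blk i ∩ blk j) k μ t (lam - 1) := by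
  refine ⟨(hD.2.1 i hi).2, fun j hj => ⟨inter_subset_left,
    hμ j (mem_of_mem_erase hj) (ne_of_mem_erase hj)⟩, fun T hT hTt => ?_⟩
  have hfilter : (b.erase i).filter (fun j => T ⊆ blk i ∩ blk j)
      = (b.filter (T ⊆ blk ·)).erase i := by
    ext j
    simp only [mem_filter, mem_erase, subset_inter_iff]
    tauto
  rw [hfilter, card_erase_of_mem (mem_filter.mpr ⟨hi, hT⟩),
    hD.2.2 T (hT.trans (hD.2.1 i hi).1) hTt]

theorem comap {β : Type*} [Fintype β] [DecidableEq β] (hD : IsDesign X b blk v k t lam)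
    (f : β ↪ α) (hf : univ.map f = X) :
    IsDesign (univ : Finset β) b (fun i => univ.filter (f · ∈ blk i)) v k t lam := by
  refine ⟨by rw [← card_map f, hf, hD.1], fun i hi => ⟨subset_univ _, ?_⟩, fun T _ hTt => ?_⟩
  · rw [card_univ_filter_mem f (hf ▸ (hD.2.1 i hi).1), (hD.2.1 i hi).2]
  · have hTX : T.map f ⊆ X := hf ▸ map_subset_map.mpr (subset_univ T)
    rw [← hD.2.2 (T.map f) hTX (by rw [card_map, hTt])]
    congr 1
    ext i
    simp [subset_iff]

end IsDesign

/-- If no quasi-symmetric 2-(57,12,11) design with block intersection numbers 0 and 3 exists,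
then no quasi-3 design with parameters 2-(267,57,12) and triple intersection numbers 0 and 3
exists. -/
theorem no_quasi3_267
    (h : ∀ (ι : Type) (b : Finset ι) (blk : ι → Finset (Fin 57)),
      ¬ (IsDesign Finset.univ b blk 57 12 2 11 ∧
        ∀ i ∈ b, ∀ j ∈ b, i ≠ j →
          (blk i ∩ blk j).card = 0 ∨ (blk i ∩ blk j).card = 3)) :
    ∀ (ι : Type) (b : Finset ι) (blk : ι → Finset (Fin 267)),
      ¬ (IsDesign Finset.univ b blk 267 57 2 12 ∧ b.card = 267 ∧
        ∀ i ∈ b, ∀ j ∈ b, ∀ l ∈ b, i ≠ j → i ≠ l → j ≠ l →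
          (blk i ∩ blk j ∩ blk l).card = 0 ∨ (blk i ∩ blk j ∩ blk l).card = 3) := by
  classical
  rintro ι b blk ⟨hD, hb, htri⟩
  obtain ⟨i, hi⟩ : b.Nonempty := card_pos.mp (by omega)
  have hder := hD.derived hi fun j hj hji =>
    hD.card_inter_eq_of_card_eq hb (by norm_num) hi hj hji.symm
  set f := ((blk i).orderEmbOfFin hder.1).toEmbedding
  have hf : univ.map f = blk i := map_orderEmbOfFin_univ _ _
  refine h ι (b.erase i) (fun j => univ.filter (f · ∈ blk i ∩ blk j))
    ⟨hder.comap f hf, fun j hj l hl hjl => ?_⟩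
  simp_rw [← filter_and, ← mem_inter]
  rw [card_univ_filter_mem f (hf ▸ inter_subset_left.trans inter_subset_left),
    ← inter_inter_distrib_left, ← inter_assoc]
  exact htri i hi j (mem_of_mem_erase hj) l (mem_of_mem_erase hl) (ne_of_mem_erase hj).symm
    (ne_of_mem_erase hl).symm hjl
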